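/- In the setting of an ω^op-continuous H : Set → Set with ω-cocontinuous lifting H̃ to Alg(M) and M0 = 1: the composites f ∘ i_n : HⁿM0 → L satisfy p_n ∘ f ∘ i_n = id, hence each f ∘ i_n is a (split) monomorphism; moreover, if the monad M is finitary, then the canonical M-algebra map f : I → L from the initial H̃-algebra to the final coalgebra is a monomorphism, so I is isomorphic to a subalgebra of L. -/

import Mathlib

open CategoryTheory

universe u

namespace OnCoalgebrasOverAlgebras

/-- A distributive law `λ : MH ⟶ HM` of a monad `M` on `Set` over an endofunctor `H`,
equivalently (the data of) a lifting `H̃` of `H` to the Eilenberg–Moore category of `M`: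
it satisfies `λ ∘ u_H = Hu` and `λ ∘ m_H = Hm ∘ λ_M ∘ Mλ`. -/
structure DistLaw (M : Monad (Type u)) (H : Type u ⥤ Type u) where
  app : ∀ X : Type u, M.toFunctor.obj (H.obj X) → H.obj (M.toFunctor.obj X)
  naturality : ∀ {X Y : Type u} (f : X → Y) (z : M.toFunctor.obj (H.obj X)),
    app Y (M.toFunctor.map (H.map (TypeCat.ofHom f)) z)
      = H.map (M.toFunctor.map (TypeCat.ofHom f)) (app X z)
  unit : ∀ (X : Type u) (z : H.obj X),
    app X (M.η.app (H.obj X) z) = H.map (M.η.app X) z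
  mul : ∀ (X : Type u) (z : M.toFunctor.obj (M.toFunctor.obj (H.obj X))),
    app X (M.μ.app (H.obj X) z)
      = H.map (M.μ.app X) (app (M.toFunctor.obj X) (M.toFunctor.map (TypeCat.ofHom (app X)) z))

/-- The terminal sequence `1, H1, H²1, …` of an endofunctor `H` on `Set`. -/
def TObj (H : Type u ⥤ Type u) : ℕ → Type u
  | 0 => PUnit
  | n + 1 => H.obj (TObj H n)

/-- The connecting maps `Hⁿt : H^{n+1}1 → Hⁿ1` of the terminal sequence,
where `t : H1 → 1` is the unique map. -/
def TMap (H : Type u ⥤ Type u) : ∀ n : ℕ, TObj H (n + 1) → TObj H n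
  | 0 => fun _ => PUnit.unit
  | n + 1 => H.map (TypeCat.ofHom (TMap H n))

/-- The limit `L = {(x_n) | Hⁿt (x_{n+1}) = x_n}` of the terminal sequence of `H`. -/
def L (H : Type u ⥤ Type u) : Type u :=
  { x : ∀ n, TObj H n // ∀ n, TMap H n (x (n + 1)) = x n }

/-- The limit projections `p_n : L → Hⁿ1`. -/
def pr (H : Type u ⥤ Type u) (n : ℕ) : L H → TObj H n := fun x => x.1 n

/-- The `M`-algebra structures `a_n : MHⁿ1 → Hⁿ1` on the terminal sequence,
defined by `a₀ : M1 → 1` the unique map and `a_{n+1} = H a_n ∘ λ_{Hⁿ1}`. -/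
def aStr {M : Monad (Type u)} {H : Type u ⥤ Type u} (l : DistLaw M H) :
    ∀ n : ℕ, M.toFunctor.obj (TObj H n) → TObj H n
  | 0 => fun _ => PUnit.unit
  | n + 1 => fun z => H.map (TypeCat.ofHom (aStr l n)) (l.app (TObj H n) z)

/-- The cone `α_n : C → Hⁿ1` over the terminal sequence induced by an `H`-coalgebra
structure `c : C → HC`; `α₀` is the unique map and `α_{n+1} = Hα_n ∘ c`. -/
def alphaCone (H : Type u ⥤ Type u) {C : Type u} (c : C → H.obj C) :
    ∀ n : ℕ, C → TObj H n
  | 0 => fun _ => PUnit.unit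
  | n + 1 => fun z => H.map (TypeCat.ofHom (alphaCone H c n)) (c z)

open Classical in
/-- The canonical ultrametric on the limit `L` of the terminal sequence:
`d(x,y) = 2^{-n}` with `n` least such that `p_n x ≠ p_n y`, and `d(x,y) = 0` if `x = y`. -/
noncomputable def dL (H : Type u ⥤ Type u) (x y : L H) : ℝ :=
  if x = y then 0 else (2⁻¹ : ℝ) ^ sInf { n : ℕ | x.1 n ≠ y.1 n }

/-- The maps `Hⁿ! : Hⁿ1 → H^{n+1}1` generated by a map `! : 1 → H1`
(under `M0 = 1`, the unique algebra map out of the initial algebra `M0`). -/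
def Emb (H : Type u ⥤ Type u) (e : TObj H 0 → TObj H 1) :
    ∀ n : ℕ, TObj H n → TObj H (n + 1)
  | 0 => e
  | n + 1 => H.map (TypeCat.ofHom (Emb H e n))

private lemma mapmap (F : Type u ⥤ Type u) {X Y Z : Type u} (f : X → Y) (g : Y → Z)
    (x : F.obj X) : F.map (TypeCat.ofHom g) (F.map (TypeCat.ofHom f) x)
      = F.map (TypeCat.ofHom (fun w => g (f w))) x :=
  (Functor.map_comp_apply F (TypeCat.ofHom f) (TypeCat.ofHom g) x).symm

/-- The lifting `H̃` of `H` to the Eilenberg–Moore category `Alg(M)` determined by a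
distributive law `λ : MH ⟶ HM`: it sends an algebra `(X, x)` to `(HX, Hx ∘ λ_X)`
and satisfies `U^M ∘ H̃ = H ∘ U^M`. -/
def liftF (M : Monad (Type u)) (H : Type u ⥤ Type u) (l : DistLaw M H) :
    M.Algebra ⥤ M.Algebra where
  obj A :=
    { A := H.obj A.A
      a := TypeCat.ofHom fun z => H.map A.a (l.app A.A z)
      unit := by
        ext z
        change H.map A.a (l.app A.A (M.η.app (H.obj A.A) z)) = z
        rw [l.unit A.A z, ← Functor.map_comp_apply, A.unit]
        simp
      assoc := by
        ext z
        change H.map A.a (l.app A.A (M.μ.app (H.obj A.A) z))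
          = H.map A.a (l.app A.A (M.toFunctor.map
              (TypeCat.ofHom fun w => H.map A.a (l.app A.A w)) z))
        rw [← mapmap M.toFunctor (l.app A.A) (H.map A.a) z]
        erw [l.naturality A.a]
        rw [l.mul A.A z]
        erw [← Functor.map_comp_apply H, ← Functor.map_comp_apply H, A.assoc]
        rfl }
  map := fun {A B} f =>
    { f := H.map f.f
      h := by
        ext z
        change H.map B.a (l.app B.A (M.toFunctor.map (H.map f.f) z))
          = H.map f.f (H.map A.a (l.app A.A z))
        erw [l.naturality f.f z]
        erw [← Functor.map_comp_apply H, ← Functor.map_comp_apply H, f.h] }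
  map_id A := by
    apply Monad.Algebra.Hom.ext
    show H.map (𝟙 A.A) = 𝟙 (H.obj A.A)
    simp
  map_comp f g := by
    apply Monad.Algebra.Hom.ext
    show H.map (f.f ≫ g.f) = _
    rw [H.map_comp]
    rfl

/-! The composites `f ∘ iₙ` have the left inverses `pₙ`, so `f` is injective on each stage of
the chain `iₙ : Hⁿ1 → I`. Since these stages increase, `f` is injective as soon as they
cover `I`.
They do when `M` is finitary: every element of `M (⋃ₙ range iₙ)` already lives in some
`M (Hⁿ1)`, so `⋃ₙ range iₙ` is a subalgebra of `I` through which the whole colimit cocone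
factors, and the universal property of `I` forces it to be all of `I`. -/

universe v

section Chain

variable {X : ℕ → Type u} {Y : Type u} (emb : ∀ n, X n → X (n + 1)) (i : ∀ n, X n → Y)

theorem monotone_range_of_chain (hi : ∀ n x, i (n + 1) (emb n x) = i n x) :
    Monotone fun n => Set.range (i n) :=
  monotone_nat_of_le_succ fun n _ ⟨x, hx⟩ => ⟨emb n x, (hi n x).trans hx⟩

theorem injective_of_injective_comp_chain {Z : Type*}
    (hi : ∀ n x, i (n + 1) (emb n x) = i n x) (hcover : ∀ y, ∃ n x, i n x = y) {f : Y → Z}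
    (hf : ∀ n, Function.Injective (f ∘ i n)) :
    Function.Injective f := by
  intro y y' hyy'
  obtain ⟨n, x, rfl⟩ := hcover y
  obtain ⟨n', x', rfl⟩ := hcover y'
  have hmono := monotone_range_of_chain emb i hi
  obtain ⟨z, hz⟩ := hmono (le_max_left n n') ⟨x, rfl⟩
  obtain ⟨z', hz'⟩ := hmono (le_max_right n n') ⟨x', rfl⟩
  rw [← hz, ← hz'] at hyy' ⊢
  exact congrArg _ (hf _ hyy')

def chainCocone (hi : ∀ n x, i (n + 1) (emb n x) = i n x) :
    Limits.Cocone (Functor.ofSequence fun n => TypeCat.ofHom (emb n)) where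
  pt := Y
  ι := NatTrans.ofSequence (fun n => TypeCat.ofHom (i n)) fun n => by
    ext x
    simp only [Functor.ofSequence_map_homOfLE_succ]
    exact hi n x

theorem map_surjective_of_surjective (F : Type u ⥤ Type v) {A B : Type u} {g : A → B}
    (hg : Function.Surjective g) : Function.Surjective (F.map (TypeCat.ofHom g)) := by
  have : Epi (TypeCat.ofHom g) := (epi_iff_surjective _).2 hg
  have := isSplitEpi_of_epi (TypeCat.ofHom g)
  exact (epi_iff_surjective _).1 inferInstance

theorem exists_map_val_eq_map_of_preservesColimitsOfShape (F : Type u ⥤ Type v)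
    [Limits.PreservesColimitsOfShape ℕ F] (hi : ∀ n x, i (n + 1) (emb n x) = i n x)
    (z : F.obj (⋃ n, Set.range (i n))) :
    ∃ n w, F.map (TypeCat.ofHom Subtype.val) z = F.map (TypeCat.ofHom (i n)) w := by
  let G := Functor.ofSequence fun n => TypeCat.ofHom (emb n)
  let desc := Limits.colimit.desc G (chainCocone emb i hi)
  have desc_ι : ∀ n x, desc (Limits.colimit.ι G n x) = i n x := fun n x =>
    ConcreteCategory.congr_hom (Limits.colimit.ι_desc (chainCocone emb i hi) n) x
  have mem : ∀ q, desc q ∈ ⋃ n, Set.range (i n) := fun q => by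
    obtain ⟨n, x, rfl⟩ := Limits.Types.jointly_surjective' q
    exact Set.mem_iUnion.2 ⟨n, x, (desc_ι n x).symm⟩
  let κ : Limits.colimit G → ⋃ n, Set.range (i n) := fun q => ⟨desc q, mem q⟩
  have hκ : Function.Surjective κ := by
    rintro ⟨y, hy⟩
    obtain ⟨n, x, rfl⟩ := Set.mem_iUnion.1 hy
    exact ⟨Limits.colimit.ι G n x, Subtype.ext (desc_ι n x)⟩
  obtain ⟨z', rfl⟩ := map_surjective_of_surjective F hκ z
  obtain ⟨n, w, rfl⟩ := Limits.Types.jointly_surjective _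
    (Limits.isColimitOfPreserves F (Limits.colimit.isColimit G)) z'
  have hfactor : Limits.colimit.ι G n ≫ TypeCat.ofHom κ ≫ TypeCat.ofHom Subtype.val
      = TypeCat.ofHom (i n) := by
    ext x
    exact desc_ι n x
  refine ⟨n, w, ?_⟩
  refine Eq.trans ?_ (congrArg (fun φ => F.map φ w) hfactor)
  simp only [Functor.map_comp, ConcreteCategory.comp_apply]
  rfl

end Chain

section Subalgebra

variable {M : Monad (Type u)} {I : Type u} (ζ : M.toFunctor.obj I → I)

def restrictStr (S : Set I)
    (hS : ∀ z, ζ (M.toFunctor.map (TypeCat.ofHom (Subtype.val : S → I)) z) ∈ S) :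
    M.toFunctor.obj S → S :=
  fun z => ⟨ζ (M.toFunctor.map (TypeCat.ofHom Subtype.val) z), hS z⟩

variable {ζ} {S : Set I}
  (hS : ∀ z, ζ (M.toFunctor.map (TypeCat.ofHom (Subtype.val : S → I)) z) ∈ S)

theorem restrictStr_unit (hζu : ∀ z, ζ (M.η.app I z) = z) (z : S) :
    restrictStr ζ S hS (M.η.app S z) = z := by
  apply Subtype.ext
  have hnat :=
    ConcreteCategory.congr_hom (M.η.naturality (TypeCat.ofHom (Subtype.val : S → I))) z
  simp only [Functor.id_map, types_comp_apply] at hnat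
  exact (congrArg ζ hnat.symm).trans (hζu z.1)

theorem restrictStr_mul
    (hζm : ∀ z, ζ (M.μ.app I z) = ζ (M.toFunctor.map (TypeCat.ofHom ζ) z))
    (z : M.toFunctor.obj (M.toFunctor.obj S)) :
    restrictStr ζ S hS (M.μ.app S z)
      = restrictStr ζ S hS (M.toFunctor.map (TypeCat.ofHom (restrictStr ζ S hS)) z) := by
  apply Subtype.ext
  have hnat :=
    ConcreteCategory.congr_hom (M.μ.naturality (TypeCat.ofHom (Subtype.val : S → I))) z
  simp only [Functor.comp_map, types_comp_apply] at hnat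
  change ζ _ = ζ (M.toFunctor.map _ (M.toFunctor.map _ z))
  rw [← hnat, hζm, mapmap, ← Functor.map_comp_apply]
  rfl

end Subalgebra

section ChainColimit

variable {M : Monad (Type u)} {X : ℕ → Type u} (a : ∀ n, M.toFunctor.obj (X n) → X n)
  (emb : ∀ n, X n → X (n + 1)) {I : Type u} (ζ : M.toFunctor.obj I → I)
  (i : ∀ n, X n → I)

def IsAlgebraChainColimit : Prop :=
  ∀ (B : Type u) (b : M.toFunctor.obj B → B),
    (∀ z, b (M.η.app B z) = z) →
    (∀ z, b (M.μ.app B z) = b (M.toFunctor.map (TypeCat.ofHom b) z)) →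
    ∀ g : ∀ n : ℕ, X n → B,
      (∀ (n : ℕ) (z : M.toFunctor.obj (X n)),
        g n (a n z) = b (M.toFunctor.map (TypeCat.ofHom (g n)) z)) →
      (∀ (n : ℕ) (x : X n), g (n + 1) (emb n x) = g n x) →
      ∃! h : I → B,
        (∀ z, h (ζ z) = b (M.toFunctor.map (TypeCat.ofHom h) z)) ∧
          ∀ (n : ℕ) (x : X n), h (i n x) = g n x

variable {a emb ζ i}

theorem IsAlgebraChainColimit.jointly_surjective [Limits.PreservesColimitsOfShape ℕ M.toFunctor]
    (hcolim : IsAlgebraChainColimit a emb ζ i)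
    (hζu : ∀ z, ζ (M.η.app I z) = z)
    (hζm : ∀ z, ζ (M.μ.app I z) = ζ (M.toFunctor.map (TypeCat.ofHom ζ) z))
    (hialg : ∀ n z, i n (a n z) = ζ (M.toFunctor.map (TypeCat.ofHom (i n)) z))
    (hicoc : ∀ n x, i (n + 1) (emb n x) = i n x) (y : I) :
    ∃ n x, i n x = y := by
  set S := ⋃ n, Set.range (i n)
  have hS : ∀ z, ζ (M.toFunctor.map (TypeCat.ofHom (Subtype.val : S → I)) z) ∈ S := by
    intro z
    obtain ⟨n, w, hw⟩ :=
      exists_map_val_eq_map_of_preservesColimitsOfShape emb i M.toFunctor hicoc z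
    rw [hw, ← hialg]
    exact Set.mem_iUnion.2 ⟨n, _, rfl⟩
  let g : ∀ n, X n → S := fun n x => ⟨i n x, Set.mem_iUnion.2 ⟨n, x, rfl⟩⟩
  have g_alg : ∀ n z,
      g n (a n z) = restrictStr ζ S hS (M.toFunctor.map (TypeCat.ofHom (g n)) z) := fun n z =>
    Subtype.ext <| (hialg n z).trans (congrArg ζ (mapmap M.toFunctor (g n) Subtype.val z).symm)
  obtain ⟨h, ⟨h_alg, h_i⟩, -⟩ := hcolim S (restrictStr ζ S hS) (restrictStr_unit hS hζu)
    (restrictStr_mul hS hζm) g g_alg fun n x => Subtype.ext (hicoc n x)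
  have hid : (fun y => (h y).1) = id := by
    refine (hcolim I ζ hζu hζm i hialg hicoc).unique
      ⟨fun z => ?_, fun n x => congrArg Subtype.val (h_i n x)⟩ ⟨fun z => ?_, fun n x => rfl⟩
    · exact (congrArg Subtype.val (h_alg z)).trans (congrArg ζ (mapmap _ h Subtype.val z))
    · change ζ z = ζ (M.toFunctor.map (𝟙 I) z)
      rw [M.toFunctor.map_id]
      rfl
  obtain ⟨n, x, hx⟩ := Set.mem_iUnion.1 (h y).2
  exact ⟨n, x, hx.trans (congrFun hid y)⟩

end ChainColimit

theorem initial_algebra_subalgebra_of_final_coalgebra_general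
    (M : Monad (Type u)) (H : Type u ⥤ Type u)
    -- `H` admits a lifting `H̃` to `Alg(M)`, which is `ω`-cocontinuous
    (l : DistLaw M H)
    -- the unique algebra map `! : 1 = M0 → HM0 = H1`
    (e : TObj H 0 → TObj H 1)
    -- the initial `H̃`-algebra `I`: an `M`-algebra `(I, ζ)` …
    (I : Type u) (ζ : M.toFunctor.obj I → I)
    (hζu : ∀ z, ζ (M.η.app I z) = z)
    (hζm : ∀ z, ζ (M.μ.app I z) = ζ (M.toFunctor.map (TypeCat.ofHom ζ) z))
    -- … with a cocone `i_n : HⁿM0 = Hⁿ1 → I` of `M`-algebra morphisms …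
    (i : ∀ n : ℕ, TObj H n → I)
    (hialg : ∀ (n : ℕ) (z : M.toFunctor.obj (TObj H n)),
      i n (aStr l n z) = ζ (M.toFunctor.map (TypeCat.ofHom (i n)) z))
    (hicoc : ∀ (n : ℕ) (x : TObj H n), i (n + 1) (Emb H e n x) = i n x)
    -- … which is colimiting in `Alg(M)` for the initial sequence `M0 → HM0 → H²M0 → …`
    (hcolim : ∀ (B : Type u) (b : M.toFunctor.obj B → B),
      (∀ z, b (M.η.app B z) = z) →
      (∀ z, b (M.μ.app B z) = b (M.toFunctor.map (TypeCat.ofHom b) z)) →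
      ∀ g : ∀ n : ℕ, TObj H n → B,
        (∀ (n : ℕ) (z : M.toFunctor.obj (TObj H n)),
          g n (aStr l n z) = b (M.toFunctor.map (TypeCat.ofHom (g n)) z)) →
        (∀ (n : ℕ) (x : TObj H n), g (n + 1) (Emb H e n x) = g n x) →
        ∃! h : I → B,
          (∀ z, h (ζ z) = b (M.toFunctor.map (TypeCat.ofHom h) z)) ∧ ∀ (n : ℕ) (x : TObj H n), h (i n x) = g n x)
    -- the canonical `M`-algebra map `f : I → L` with `p_n ∘ f ∘ i_n = Hⁿs = id`
    (f : I → L H)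
    (hfi : ∀ (n : ℕ) (x : TObj H n), pr H n (f (i n x)) = x)
    -- `M` is finitary
    [Limits.PreservesFilteredColimits M.toFunctor] :
    -- `p_n ∘ f ∘ i_n = id` …
    (∀ (n : ℕ) (x : TObj H n), pr H n (f (i n x)) = x) ∧
    -- … hence each `f ∘ i_n` is a split monomorphism …
    (∀ n : ℕ, ∃ r : L H → TObj H n, ∀ x : TObj H n, r (f (i n x)) = x) ∧
    -- … and `f` itself is a monomorphism (an injective `M`-algebra map)
    Function.Injective f := by
  have : Limits.PreservesFilteredColimitsOfSize.{0, 0} M.toFunctor :=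
    Limits.preservesSmallestFilteredColimits_of_preservesFilteredColimits M.toFunctor
  have hcover : ∀ y, ∃ n x, i n x = y :=
    IsAlgebraChainColimit.jointly_surjective (a := aStr l) (emb := Emb H e)
      hcolim hζu hζm hialg hicoc
  exact ⟨hfi, fun n => ⟨pr H n, hfi n⟩,
    injective_of_injective_comp_chain (Emb H e) i hicoc hcover fun n =>
      Function.LeftInverse.injective (g := pr H n) (hfi n)⟩

/-- In the setting of Theorem 1 (`ω^op`-continuous `H`,
`ω`-cocontinuous lifting `H̃`, `M0 = 1`): the composites `f ∘ i_n : HⁿM0 → L` satisfy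
`p_n ∘ f ∘ i_n = id`, hence each `f ∘ i_n` is a (split) monomorphism; moreover, if the
monad `M` is finitary then the canonical `M`-algebra map `f : I → L` from the initial
`H̃`-algebra to the final coalgebra is a monomorphism, so `I` is isomorphic to a
subalgebra of `L`. -/
theorem initial_algebra_subalgebra_of_final_coalgebra
    (M : Monad (Type u)) (H : Type u ⥤ Type u)
    -- `H` is `ω^op`-continuous
    [Limits.PreservesLimitsOfShape ℕᵒᵖ H]
    -- `H` admits a lifting `H̃` to `Alg(M)`, which is `ω`-cocontinuous
    (l : DistLaw M H)
    [Limits.PreservesColimitsOfShape ℕ (liftF M H l)]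
    -- `M0 = 1` in `Alg(M)`: the free algebra on the empty set is a singleton
    (h0 : Subsingleton (M.toFunctor.obj PEmpty))
    (h1 : Nonempty (M.toFunctor.obj PEmpty))
    -- the final coalgebra structure `ξ : L ≅ HL` obtained from the limit
    (ξ : L H → H.obj (L H)) (hbij : Function.Bijective ξ)
    (hξ : ∀ (n : ℕ) (x : L H), pr H (n + 1) x = H.map (TypeCat.ofHom (pr H n)) (ξ x))
    -- the `M`-algebra structure `γ : ML → L`, the unique coalgebra map from `(ML, λ_L ∘ Mξ)`
    (γ : M.toFunctor.obj (L H) → L H)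
    (hγ : ∀ z, ξ (γ z) = H.map (TypeCat.ofHom γ) (l.app (L H) (M.toFunctor.map (TypeCat.ofHom ξ) z)))
    -- the unique algebra map `! : 1 = M0 → HM0 = H1`
    (e : TObj H 0 → TObj H 1)
    (he : ∀ z, e (aStr l 0 z) = aStr l 1 (M.toFunctor.map (TypeCat.ofHom e) z))
    -- the initial `H̃`-algebra `I`: an `M`-algebra `(I, ζ)` …
    (I : Type u) (ζ : M.toFunctor.obj I → I)
    (hζu : ∀ z, ζ (M.η.app I z) = z)
    (hζm : ∀ z, ζ (M.μ.app I z) = ζ (M.toFunctor.map (TypeCat.ofHom ζ) z))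
    -- … with a cocone `i_n : HⁿM0 = Hⁿ1 → I` of `M`-algebra morphisms …
    (i : ∀ n : ℕ, TObj H n → I)
    (hialg : ∀ (n : ℕ) (z : M.toFunctor.obj (TObj H n)),
      i n (aStr l n z) = ζ (M.toFunctor.map (TypeCat.ofHom (i n)) z))
    (hicoc : ∀ (n : ℕ) (x : TObj H n), i (n + 1) (Emb H e n x) = i n x)
    -- … which is colimiting in `Alg(M)` for the initial sequence `M0 → HM0 → H²M0 → …`
    (hcolim : ∀ (B : Type u) (b : M.toFunctor.obj B → B),
      (∀ z, b (M.η.app B z) = z) →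
      (∀ z, b (M.μ.app B z) = b (M.toFunctor.map (TypeCat.ofHom b) z)) →
      ∀ g : ∀ n : ℕ, TObj H n → B,
        (∀ (n : ℕ) (z : M.toFunctor.obj (TObj H n)),
          g n (aStr l n z) = b (M.toFunctor.map (TypeCat.ofHom (g n)) z)) →
        (∀ (n : ℕ) (x : TObj H n), g (n + 1) (Emb H e n x) = g n x) →
        ∃! h : I → B,
          (∀ z, h (ζ z) = b (M.toFunctor.map (TypeCat.ofHom h) z)) ∧ ∀ (n : ℕ) (x : TObj H n), h (i n x) = g n x)
    -- the canonical `M`-algebra map `f : I → L` with `p_n ∘ f ∘ i_n = Hⁿs = id`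
    (f : I → L H)
    (hfalg : ∀ z, f (ζ z) = γ (M.toFunctor.map (TypeCat.ofHom f) z))
    (hfi : ∀ (n : ℕ) (x : TObj H n), pr H n (f (i n x)) = x)
    -- `M` is finitary
    [Limits.PreservesFilteredColimits M.toFunctor] :
    -- `p_n ∘ f ∘ i_n = id` …
    (∀ (n : ℕ) (x : TObj H n), pr H n (f (i n x)) = x) ∧
    -- … hence each `f ∘ i_n` is a split monomorphism …
    (∀ n : ℕ, ∃ r : L H → TObj H n, ∀ x : TObj H n, r (f (i n x)) = x) ∧
    -- … and `f` itself is a monomorphism (an injective `M`-algebra map)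
    Function.Injective f :=
  initial_algebra_subalgebra_of_final_coalgebra_general M H l e I ζ hζu hζm i hialg hicoc hcolim f
    hfi

end OnCoalgebrasOverAlgebras
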